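/- arXiv:0810.0654 — 2 statements merged into one kernel-verified Lean document; each statement's English description precedes it below -/
import Mathlib

section
/- Assume α < N and set a̲ = (N-α)^{1/(q-1)}. Then for any a ∈ (0, a̲], the global solution w(·,a) satisfies w(r,a) > 0 for all r ∈ [0,∞). -/
open Set Filter Topology Asymptotics

/-- The p-Laplacian nonlinearity φ_p(x) = |x|^{p-2} x. -/
noncomputable def phiP (p x : ℝ) : ℝ := |x| ^ (p - 2) * x

/-- `w` is a solution of equation (E) on the interval `I ⊆ (0,∞)`:
`w` is C¹ on `I`, `|w'|^{p-2} w'` is C¹ on `I`, and the equation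
`(|w'|^{p-2}w')' + ((N-1)/r)|w'|^{p-2}w' + r w' + α w + |w|^{q-1} w = 0`
holds on `I` (derivatives taken within `I`). -/
def IsSolutionOn (N : ℕ) (p q α : ℝ) (w : ℝ → ℝ) (I : Set ℝ) : Prop :=
  ContDiffOn ℝ 1 w I ∧
  ContDiffOn ℝ 1 (fun r => phiP p (derivWithin w I r)) I ∧
  ∀ r ∈ I,
    derivWithin (fun s => phiP p (derivWithin w I s)) I r
      + ((N : ℝ) - 1) / r * phiP p (derivWithin w I r)
      + r * derivWithin w I r + α * w r + |w r| ^ (q - 1) * w r = 0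

/-- `w` is the global solution of (E) on `[0,∞)` with `w(0) = a`, `w'(0) = 0`:
`w ∈ C¹([0,∞))`, `|w'|^{p-2}w' ∈ C¹([0,∞))`, and (E) holds on `(0,∞)`. -/
def IsGlobalSolution (N : ℕ) (p q α a : ℝ) (w : ℝ → ℝ) : Prop :=
  ContDiffOn ℝ 1 w (Ici 0) ∧
  ContDiffOn ℝ 1 (fun r => phiP p (derivWithin w (Ici 0) r)) (Ici 0) ∧
  (∀ r ∈ Ioi (0 : ℝ),
    derivWithin (fun s => phiP p (derivWithin w (Ici 0) s)) (Ici 0) r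
      + ((N : ℝ) - 1) / r * phiP p (derivWithin w (Ici 0) r)
      + r * derivWithin w (Ici 0) r + α * w r + |w r| ^ (q - 1) * w r = 0) ∧
  w 0 = a ∧ derivWithin w (Ici 0) 0 = 0

/-- `r` is an isolated zero of `w` relative to the set `I`. -/
def IsIsolatedZeroOn (w : ℝ → ℝ) (I : Set ℝ) (r : ℝ) : Prop :=
  r ∈ I ∧ w r = 0 ∧ ∀ᶠ s in 𝓝[I \ {r}] r, w s ≠ 0

/-- `w` has at least `n` isolated zeros in `(0,∞)`. -/
def HasAtLeastIsolatedZeros (w : ℝ → ℝ) (n : ℕ) : Prop :=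
  ∃ z : Fin n → ℝ, StrictMono z ∧ ∀ i, 0 < z i ∧ IsIsolatedZeroOn w (Ici 0) (z i)

/-! With `N = n + 1` and `φ = |w'|^{p-2} w'`, equation (E) gives
`(r^n φ)' = r^n (-r w' - α w - |w|^{q-1} w)` and
`(r^{n+1} w + r^n φ)' = r^n ((N - α) w - |w|^{q-1} w)`.
The first identity makes `φ` negative as long as `w` stays positive: it is so near `0`, and at a
first zero of `φ` the equation would force `φ' < 0`. Hence `w` decreases, so `0 < w < a ≤ a̲`
before a first zero `r₀` of `w`, and by the second identity `r₀^n φ(r₀) > 0`, i.e. `w'(r₀) > 0`,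
which is impossible at the first zero of a positive function. -/

lemma exists_first_zero_of_pos_of_nonpos {f : ℝ → ℝ} {a b : ℝ} (hab : a ≤ b)
    (hf : ContinuousOn f (Icc a b)) (ha : 0 < f a) (hb : f b ≤ 0) :
    ∃ c ∈ Ioc a b, f c = 0 ∧ ∀ x ∈ Ico a c, 0 < f x := by
  have hS : IsCompact (Icc a b ∩ f ⁻¹' Iic 0) :=
    isCompact_Icc.of_isClosed_subset (hf.preimage_isClosed_of_isClosed isClosed_Icc isClosed_Iic)
      inter_subset_left
  obtain ⟨c, ⟨⟨hac, hcb⟩, hfc⟩, hc_min⟩ := hS.exists_isLeast ⟨b, ⟨⟨hab, le_rfl⟩, hb⟩⟩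
  have h_before : ∀ x ∈ Ico a c, 0 < f x := fun x ⟨hax, hxc⟩ =>
    lt_of_not_ge fun hfx => (hc_min ⟨⟨hax, hxc.le.trans hcb⟩, hfx⟩).not_gt hxc
  obtain ⟨y, ⟨hay, hyc⟩, hfy⟩ :=
    intermediate_value_Icc' hac (hf.mono (Icc_subset_Icc_right hcb)) ⟨hfc, ha.le⟩
  have hyc' : y = c := le_antisymm hyc (hc_min ⟨⟨hay, hyc.trans hcb⟩, hfy.le⟩)
  refine ⟨c, ⟨hac.lt_of_ne ?_, hcb⟩, hyc' ▸ hfy, h_before⟩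
  rintro rfl
  exact ha.not_ge hfc

lemma HasDerivAt.nonneg_of_le_left {f : ℝ → ℝ} {f' b c : ℝ} (hf : HasDerivAt f f' c) (hbc : b < c)
    (h : ∀ x ∈ Ioo b c, f x ≤ f c) : 0 ≤ f' := by
  refine ge_of_tendsto (hasDerivAt_iff_tendsto_slope_left_right.1 hf).1 ?_
  filter_upwards [Ioo_mem_nhdsLT hbc] with x hx
  rw [slope_def_field]
  exact div_nonneg_of_nonpos (sub_nonpos.2 (h x hx)) (sub_nonpos.2 hx.2.le)

section phiP

variable {p x : ℝ}

lemma phiP_eq_zero_iff : phiP p x = 0 ↔ x = 0 := by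
  rcases eq_or_ne x 0 with rfl | hx
  · simp [phiP]
  simp [phiP, hx, (Real.rpow_pos_of_pos (abs_pos.2 hx) _).ne']

lemma phiP_pos_iff : 0 < phiP p x ↔ 0 < x := by
  rcases eq_or_ne x 0 with rfl | hx
  · simp [phiP]
  exact mul_pos_iff_of_pos_left (Real.rpow_pos_of_pos (abs_pos.2 hx) _)

lemma phiP_neg_iff : phiP p x < 0 ↔ x < 0 := by
  rcases eq_or_ne x 0 with rfl | hx
  · simp [phiP]
  have h := Real.rpow_pos_of_pos (abs_pos.2 hx) (p - 2)
  exact ⟨fun h' => neg_of_mul_neg_right h' h.le, mul_neg_of_pos_of_neg h⟩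

end phiP

noncomputable def flux (p : ℝ) (w : ℝ → ℝ) (r : ℝ) : ℝ := phiP p (derivWithin w (Ici 0) r)

namespace IsGlobalSolution

variable {n : ℕ} {p q α a r : ℝ} {w : ℝ → ℝ}

lemma apply_zero (hw : IsGlobalSolution (n + 1) p q α a w) : w 0 = a := hw.2.2.2.1

lemma flux_zero (hw : IsGlobalSolution (n + 1) p q α a w) : flux p w 0 = 0 := by
  simp [flux, hw.2.2.2.2, phiP]

lemma continuousOn (hw : IsGlobalSolution (n + 1) p q α a w) : ContinuousOn w (Ici 0) :=
  hw.1.continuousOn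

lemma continuousOn_flux (hw : IsGlobalSolution (n + 1) p q α a w) :
    ContinuousOn (flux p w) (Ici 0) :=
  hw.2.1.continuousOn

lemma continuousOn_derivWithin (hw : IsGlobalSolution (n + 1) p q α a w) :
    ContinuousOn (derivWithin w (Ici 0)) (Ici 0) :=
  hw.1.continuousOn_derivWithin (uniqueDiffOn_Ici 0) le_rfl

lemma hasDerivAt (hw : IsGlobalSolution (n + 1) p q α a w) (hr : 0 < r) :
    HasDerivAt w (derivWithin w (Ici 0) r) r := by
  have h := ((hw.1.differentiableOn one_ne_zero) r hr.le).differentiableAt (Ici_mem_nhds hr)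
  rw [derivWithin_of_mem_nhds (Ici_mem_nhds hr)]
  exact h.hasDerivAt

lemma hasDerivAt_flux (hw : IsGlobalSolution (n + 1) p q α a w) (hr : 0 < r) :
    HasDerivAt (flux p w)
      (-(n / r * flux p w r) - r * derivWithin w (Ici 0) r - α * w r - |w r| ^ (q - 1) * w r)
      r := by
  have h := ((hw.2.1.differentiableOn one_ne_zero) r hr.le).differentiableAt (Ici_mem_nhds hr)
  have heq := hw.2.2.1 r hr
  rw [derivWithin_of_mem_nhds (Ici_mem_nhds hr)] at heq
  refine h.hasDerivAt.congr_deriv ?_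
  push_cast at heq
  rw [add_sub_cancel_right] at heq
  simp only [flux]
  linarith

lemma hasDerivAt_pow_mul_flux (hw : IsGlobalSolution (n + 1) p q α a w) (hr : 0 < r) :
    HasDerivAt (fun x => x ^ n * flux p w x)
      (r ^ n * (-(r * derivWithin w (Ici 0) r) - α * w r - |w r| ^ (q - 1) * w r)) r := by
  refine ((hasDerivAt_pow n r).mul (hw.hasDerivAt_flux hr)).congr_deriv ?_
  cases n with
  | zero => simp
  | succ m =>
    rw [Nat.add_sub_cancel]
    field_simp
    ring

lemma hasDerivAt_pow_succ_mul_add_pow_mul_flux (hw : IsGlobalSolution (n + 1) p q α a w)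
    (hr : 0 < r) :
    HasDerivAt (fun x => x ^ (n + 1) * w x + x ^ n * flux p w x)
      (r ^ n * ((n + 1 - α) * w r - |w r| ^ (q - 1) * w r)) r := by
  refine (((hasDerivAt_pow (n + 1) r).mul (hw.hasDerivAt hr)).add
    (hw.hasDerivAt_pow_mul_flux hr)).congr_deriv ?_
  push_cast
  ring

lemma exists_flux_neg_near_zero (hw : IsGlobalSolution (n + 1) p q α a w) (hα : 0 ≤ α)
    (ha : 0 < a) : ∃ ε > 0, ∀ r ∈ Ioo 0 ε, flux p w r < 0 := by
  set H := fun r => -(r * derivWithin w (Ici 0) r) - α * w r - |w r| ^ (q - 1) * w r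
  have hw0 := hw.continuousOn 0 self_mem_Ici
  have hH : ContinuousWithinAt H (Ici 0) 0 :=
    ((continuousWithinAt_id.mul (hw.continuousOn_derivWithin 0 self_mem_Ici)).neg.sub
      (continuousWithinAt_const.mul hw0)).sub
      ((hw0.abs.rpow_const (Or.inl (by simp [hw.apply_zero, ha.ne']))).mul hw0)
  have hH0 : H 0 < 0 := by
    have : 0 < |a| ^ (q - 1) * a := by positivity
    simp only [H, hw.apply_zero]
    nlinarith
  obtain ⟨ε, hε, hHneg⟩ := (nhdsGE_basis 0).eventually_iff.1 (hH.eventually_lt_const hH0)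
  refine ⟨ε, hε, fun r ⟨hr, hrε⟩ => ?_⟩
  have hanti : StrictAntiOn (fun x => x ^ n * flux p w x) (Icc 0 r) := by
    refine strictAntiOn_of_deriv_neg (convex_Icc 0 r)
      (((continuous_pow n).continuousOn.mul hw.continuousOn_flux).mono Icc_subset_Ici_self)
      fun x hx => ?_
    rw [interior_Icc] at hx
    rw [(hw.hasDerivAt_pow_mul_flux hx.1).deriv]
    exact mul_neg_of_pos_of_neg (pow_pos hx.1 n) (hHneg ⟨hx.1.le, hx.2.trans hrε⟩)
  have := hanti (left_mem_Icc.2 hr.le) (right_mem_Icc.2 hr.le) hr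
  simp only [hw.flux_zero, mul_zero] at this
  exact neg_of_mul_neg_right this (pow_nonneg hr.le n)

lemma flux_neg_of_forall_pos (hw : IsGlobalSolution (n + 1) p q α a w) (hα : 0 ≤ α)
    (ha : 0 < a) {r₀ : ℝ} (hpos : ∀ r ∈ Ioo 0 r₀, 0 < w r) : ∀ r ∈ Ioo 0 r₀, flux p w r < 0 := by
  obtain ⟨ε, hε, hnear⟩ := hw.exists_flux_neg_near_zero hα ha
  rintro r ⟨hr, hrr₀⟩
  by_contra! hφr
  have hεr : ε ≤ r := le_of_not_gt fun h => (hnear r ⟨hr, h⟩).not_ge hφr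
  obtain ⟨c, ⟨hεc, hcr⟩, hφc, hbefore⟩ := exists_first_zero_of_pos_of_nonpos (a := ε / 2)
    (by linarith) (hw.continuousOn_flux.mono fun x hx => mem_Ici.2 (by linarith [hx.1])).neg
    (neg_pos.2 (hnear _ ⟨by positivity, by linarith⟩)) (neg_nonpos.2 hφr)
  simp only [Pi.neg_apply, neg_eq_zero, neg_pos] at hφc hbefore
  have hc : 0 < c := by linarith
  have hw'c : derivWithin w (Ici 0) c = 0 := phiP_eq_zero_iff.1 hφc
  have hwc : 0 < w c := hpos c ⟨hc, hcr.trans_lt hrr₀⟩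
  have hderiv : -(n / c * flux p w c) - c * derivWithin w (Ici 0) c - α * w c
      - |w c| ^ (q - 1) * w c < 0 := by
    have : 0 < |w c| ^ (q - 1) * w c := by positivity
    rw [hφc, hw'c]
    nlinarith
  refine hderiv.not_ge ((hw.hasDerivAt_flux hc).nonneg_of_le_left hεc fun x hx => ?_)
  linarith [hbefore x ⟨hx.1.le, hx.2⟩]

lemma strictAntiOn_of_forall_pos (hw : IsGlobalSolution (n + 1) p q α a w) (hα : 0 ≤ α)
    (ha : 0 < a) {r₀ : ℝ} (hpos : ∀ r ∈ Ioo 0 r₀, 0 < w r) : StrictAntiOn w (Icc 0 r₀) := by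
  refine strictAntiOn_of_deriv_neg (convex_Icc 0 r₀) (hw.continuousOn.mono Icc_subset_Ici_self)
    fun x hx => ?_
  rw [interior_Icc] at hx
  rw [(hw.hasDerivAt hx.1).deriv]
  exact phiP_neg_iff.1 (hw.flux_neg_of_forall_pos hα ha hpos x hx)

lemma pow_succ_mul_add_pow_mul_flux_pos (hw : IsGlobalSolution (n + 1) p q α a w) {r₀ : ℝ}
    (hr₀ : 0 < r₀) (h : ∀ r ∈ Ioo 0 r₀, 0 < w r ∧ w r ^ (q - 1) < n + 1 - α) :
    0 < r₀ ^ (n + 1) * w r₀ + r₀ ^ n * flux p w r₀ := by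
  have hmono : StrictMonoOn (fun x => x ^ (n + 1) * w x + x ^ n * flux p w x) (Icc 0 r₀) := by
    refine strictMonoOn_of_deriv_pos (convex_Icc 0 r₀)
      ((((continuous_pow (n + 1)).continuousOn.mul hw.continuousOn).add
        ((continuous_pow n).continuousOn.mul hw.continuousOn_flux)).mono Icc_subset_Ici_self)
      fun x hx => ?_
    rw [interior_Icc] at hx
    rw [(hw.hasDerivAt_pow_succ_mul_add_pow_mul_flux hx.1).deriv]
    obtain ⟨hwx, hwq⟩ := h x hx
    rw [abs_of_pos hwx]
    exact mul_pos (pow_pos hx.1 n) (by nlinarith)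
  simpa [hw.flux_zero] using hmono (left_mem_Icc.2 hr₀.le) (right_mem_Icc.2 hr₀.le) hr₀

end IsGlobalSolution

theorem stmt2_general (N : ℕ) (p q α : ℝ) (hq : 1 < q) (hα : 0 < α)
    (hαN : α < N) (a : ℝ) (ha : 0 < a) (ha' : a ≤ ((N : ℝ) - α) ^ (1 / (q - 1)))
    (w : ℝ → ℝ) (hw : IsGlobalSolution N p q α a w) :
    ∀ r ∈ Ici (0 : ℝ), 0 < w r := by
  obtain ⟨n, rfl⟩ := Nat.exists_eq_add_one.2 (by exact_mod_cast hα.trans hαN : 0 < N)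
  intro r hr
  by_contra! hwr
  obtain ⟨r₀, ⟨hr₀, -⟩, hw_r₀, hpos⟩ := exists_first_zero_of_pos_of_nonpos hr
    (hw.continuousOn.mono Icc_subset_Ici_self) (hw.apply_zero ▸ ha) hwr
  replace hpos : ∀ s ∈ Ioo 0 r₀, 0 < w s := fun s hs => hpos s ⟨hs.1.le, hs.2⟩
  have hNα : 0 < (n + 1 : ℝ) - α := by push_cast at hαN; linarith
  rw [one_div] at ha'
  push_cast at ha'
  have hsmall : ∀ s ∈ Ioo 0 r₀, 0 < w s ∧ w s ^ (q - 1) < n + 1 - α := fun s hs => by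
    have hlt : w s < a := hw.apply_zero ▸ hw.strictAntiOn_of_forall_pos hα.le ha hpos
      (left_mem_Icc.2 hr₀.le) (Ioo_subset_Icc_self hs) hs.1
    exact ⟨hpos s hs, (Real.lt_rpow_inv_iff_of_pos (hpos s hs).le hNα.le (by linarith)).1
      (hlt.trans_le ha')⟩
  have hF := hw.pow_succ_mul_add_pow_mul_flux_pos hr₀ hsmall
  rw [hw_r₀, mul_zero, zero_add] at hF
  have hw'r₀ : 0 < derivWithin w (Ici 0) r₀ :=
    phiP_pos_iff.1 (pos_of_mul_pos_right hF (by positivity))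
  refine hw'r₀.not_ge (neg_nonneg.1 ((hw.hasDerivAt hr₀).neg.nonneg_of_le_left hr₀ fun s hs => ?_))
  simp only [Pi.neg_apply, hw_r₀, neg_zero, neg_nonpos]
  exact (hpos s hs).le

/-- Assume `α < N` and set `a̲ = (N-α)^{1/(q-1)}`. Then for any `a ∈ (0, a̲]`,
the global solution `w(·,a)` is positive on `[0,∞)`. -/
theorem stmt2 (N : ℕ) (hN : 1 ≤ N) (p q α : ℝ) (hp : 1 < p) (hq : 1 < q) (hα : 0 < α)
    (hαN : α < N) (a : ℝ) (ha : 0 < a) (ha' : a ≤ ((N : ℝ) - α) ^ (1 / (q - 1)))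
    (w : ℝ → ℝ) (hw : IsGlobalSolution N p q α a w) :
    ∀ r ∈ Ici (0 : ℝ), 0 < w r :=
  stmt2_general N p q α hq hα hαN a ha ha' w hw
end

section
/- Assume condition (L): p > 2, or p < 2 and α < δ. Then every solution w of equation (E) on an interval [r₀,∞) satisfies: there exists L ∈ ℝ such that lim_{r→∞} r^α w(r) = L. -/
open Set Filter Topology Asymptotics

/-!
Write `v = φ_p(w')`, so that `w' = φ_{p/(p-1)}(v)`. The energy
`(p-1)/p |v|^{p/(p-1)} + α w²/2 + |w|^{q+1}/(q+1)` is nonincreasing, hence `w` and `v` are bounded.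
If `w = O(r^{-γ})` with `γ(2-p) < p`, a barrier `K r^{-(γ+1)(p-1)}` for the equation of `v` gives
`v = O(r^{-(γ+1)(p-1)})`. The function `ζ = r^{α-1}(r w + v)` solves a linear equation
`ζ' = -h ζ + g` with damping `h = |w|^{q-1}/r ≥ 0` and `g = O(r^{α-2} v)`, so `ζ` grows no faster
than `∫ |g|`; since `r^α w = ζ - r^{α-1} v`, this improves the decay of `w` to
`O(r^{-min(α-ε, (γ+1)(p-1)+1)})`. Iterating from `γ = 0` reaches `γ = α - ε`. Condition (L) says
`(α+1)(p-1) > α - 1`, so for small `ε` also `(α-ε+1)(p-1) > α - 1`: then `h` and `g` are integrable,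
`ζ` converges and `r^{α-1} v → 0`.
-/

open MeasureTheory

lemma phiP_neg (p x : ℝ) : phiP p (-x) = -phiP p x := by simp [phiP]

lemma phiP_of_nonneg {p x : ℝ} (hp : 1 < p) (hx : 0 ≤ x) : phiP p x = x ^ (p - 1) := by
  rcases hx.eq_or_lt with rfl | hx
  · simp [phiP, Real.zero_rpow (by linarith : p - 1 ≠ 0)]
  · rw [phiP, abs_of_pos hx, ← Real.rpow_add_one hx.ne']
    ring_nf

lemma phiP_conjExponent_phiP {p : ℝ} (hp : 1 < p) (x : ℝ) :
    phiP (p / (p - 1)) (phiP p x) = x := by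
  rcases eq_or_ne x 0 with rfl | hx
  · simp [phiP]
  have hax : 0 < |x| := abs_pos.2 hx
  have habs : |phiP p x| = |x| ^ (p - 1) := by
    rw [phiP, abs_mul, abs_of_nonneg (by positivity), ← Real.rpow_add_one hax.ne']
    ring_nf
  have hexp : (p - 1) * (p / (p - 1) - 2) = 2 - p := by
    field_simp [show p - 1 ≠ 0 by linarith]
    ring
  rw [phiP, habs, ← Real.rpow_mul hax.le, hexp, phiP, ← mul_assoc, ← Real.rpow_add hax]
  norm_num

lemma mul_phiP_self_nonneg (p x : ℝ) : 0 ≤ x * phiP p x := by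
  rw [phiP, show x * (|x| ^ (p - 2) * x) = |x| ^ (p - 2) * (x * x) by ring]
  exact mul_nonneg (by positivity) (mul_self_nonneg x)

lemma isBigO_rpow_iff {f : ℝ → ℝ} {a : ℝ} :
    f =O[atTop] (fun r => r ^ a) ↔ ∃ C, 0 ≤ C ∧ ∀ᶠ r in atTop, |f r| ≤ C * r ^ a := by
  have hnorm : ∀ᶠ r : ℝ in atTop, ‖r ^ a‖ = r ^ a := by
    filter_upwards [eventually_ge_atTop 0] with r hr
    rw [Real.norm_eq_abs, abs_of_nonneg (Real.rpow_nonneg hr a)]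
  constructor
  · intro hf
    obtain ⟨C, hC, hfC⟩ := hf.exists_nonneg
    refine ⟨C, hC, ?_⟩
    filter_upwards [hfC.bound, hnorm] with r hr hr'
    rwa [hr', Real.norm_eq_abs] at hr
  · rintro ⟨C, -, hfC⟩
    refine IsBigO.of_bound C ?_
    filter_upwards [hfC, hnorm] with r hr hr'
    rwa [hr', Real.norm_eq_abs]

lemma rpow_isBigO_rpow {a b : ℝ} (hab : a ≤ b) :
    (fun r : ℝ => r ^ a) =O[atTop] (fun r => r ^ b) :=
  isBigO_rpow_iff.2 ⟨1, zero_le_one, by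
    filter_upwards [eventually_ge_atTop 1] with r hr
    rw [one_mul, abs_of_nonneg (Real.rpow_nonneg (by linarith) a)]
    exact Real.rpow_le_rpow_of_exponent_le hr hab⟩

lemma Asymptotics.IsBigO.mul_rpow {f g : ℝ → ℝ} {a b : ℝ} (hf : f =O[atTop] (fun r => r ^ a))
    (hg : g =O[atTop] (fun r => r ^ b)) :
    (fun r => f r * g r) =O[atTop] (fun r => r ^ (a + b)) := by
  refine (hf.mul hg).congr' EventuallyEq.rfl ?_
  filter_upwards [eventually_gt_atTop 0] with r hr
  exact (Real.rpow_add hr a b).symm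

lemma isBigO_one_of_isBigO_rpow {f : ℝ → ℝ} {a : ℝ} (ha : a ≤ 0)
    (hf : f =O[atTop] (fun r => r ^ a)) : f =O[atTop] (fun _ => (1 : ℝ)) :=
  (hf.trans (rpow_isBigO_rpow ha)).congr_right fun r => Real.rpow_zero r

lemma Asymptotics.IsBigO.abs_rpow {f : ℝ → ℝ} {a c : ℝ} (hc : 0 ≤ c)
    (hf : f =O[atTop] (fun r => r ^ a)) :
    (fun r => |f r| ^ c) =O[atTop] (fun r => r ^ (a * c)) := by
  refine ((isBigO_abs_left.2 hf).rpow hc ?_).congr' EventuallyEq.rfl ?_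
  · filter_upwards [eventually_ge_atTop 0] with r hr
    exact Real.rpow_nonneg hr a
  · filter_upwards [eventually_ge_atTop 0] with r hr
    exact (Real.rpow_mul hr a c).symm

lemma hasDerivAt_div_mul_rpow (C : ℝ) {e r : ℝ} (he : e ≠ 0) (hr : 0 < r) :
    HasDerivAt (fun r => C / e * r ^ e) (C * r ^ (e - 1)) r :=
  ((Real.hasDerivAt_rpow_const (Or.inl hr.ne')).const_mul (C / e)).congr_deriv (by field_simp)

lemma rpow_mul_eq_sub {α r : ℝ} (hr : 0 < r) (x y : ℝ) :
    r ^ α * x = r ^ (α - 1) * (r * x + y) - r ^ (α - 1) * y := by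
  rw [show r ^ α = r ^ (α - 1) * r by rw [← Real.rpow_add_one hr.ne']; ring_nf]
  ring

theorem abs_le_of_hasDerivAt_neg_mul_add {ζ h g G G' : ℝ → ℝ} {a R : ℝ}
    (hζ : ∀ r ∈ Ici a, HasDerivAt ζ (-h r * ζ r + g r) r) (hh : ∀ r ∈ Ici a, 0 ≤ h r)
    (hG : ∀ r ∈ Ici a, HasDerivAt G (G' r) r) (hg : ∀ r ∈ Ici a, |g r| ≤ G' r) (hR : a ≤ R) :
    |ζ R| ≤ |ζ a| + (G R - G a) := by
  have hG_mono : MonotoneOn G (Ici a) :=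
    monotoneOn_of_hasDerivWithinAt_nonneg (convex_Ici a)
      (fun r hr => (hG r hr).continuousAt.continuousWithinAt)
      (fun r hr => (hG r (interior_subset hr)).hasDerivWithinAt)
      (fun r hr => (abs_nonneg _).trans (hg r (interior_subset hr)))
  suffices key : ∀ ζ g : ℝ → ℝ, (∀ r ∈ Ici a, HasDerivAt ζ (-h r * ζ r + g r) r) →
      (∀ r ∈ Ici a, |g r| ≤ G' r) → ζ R ≤ |ζ a| + (G R - G a) by
    have hneg := key (-ζ) (-g)
      (fun r hr => ((hζ r hr).neg).congr_deriv (by simp only [Pi.neg_apply]; ring))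
      (by simpa using hg)
    rw [Pi.neg_apply, Pi.neg_apply, abs_neg] at hneg
    exact abs_le.2 ⟨by linarith, key ζ g hζ hg⟩
  intro ζ g hζ hg
  -- compare with the strict supersolution `|ζ a| + (G r - G a) + δ (r - a + 1)`, then let `δ → 0`
  refine le_of_forall_pos_le_add fun ε hε => ?_
  set δ := ε / (R - a + 1)
  have hδ : 0 < δ := div_pos hε (by linarith)
  have hB : ∀ r ∈ Ici a, HasDerivAt (fun r => |ζ a| + (G r - G a) + δ * (r - a + 1))
      (G' r + δ) r := fun r hr =>
    ((((hG r hr).sub_const _).const_add _).add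
      ((((hasDerivAt_id r).sub_const a).add_const 1).const_mul δ)).congr_deriv (by simp)
  have hle := image_le_of_deriv_right_lt_deriv_boundary' (a := a) (b := R)
    (fun r hr => (hζ r hr.1).continuousAt.continuousWithinAt)
    (fun r hr => (hζ r hr.1).hasDerivWithinAt) (by linarith [le_abs_self (ζ a)])
    (fun r hr => (hB r hr.1).continuousAt.continuousWithinAt)
    (fun r hr => (hB r hr.1).hasDerivWithinAt)
    (fun r hr heq => by
      have hpos : 0 ≤ ζ r := by
        rw [heq]
        have := hG_mono (mem_Ici.2 le_rfl) hr.1 hr.1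
        have : 0 ≤ δ * (r - a + 1) := by nlinarith [hr.1]
        positivity
      nlinarith [hh r hr.1, le_abs_self (g r), hg r hr.1]) (right_mem_Icc.2 hR)
  calc ζ R ≤ |ζ a| + (G R - G a) + δ * (R - a + 1) := hle
    _ = |ζ a| + (G R - G a) + ε := by rw [div_mul_cancel₀ _ (by linarith)]

theorem isBigO_rpow_of_hasDerivAt_neg_mul_add {ζ h g : ℝ → ℝ} {e : ℝ} (he : 0 < e)
    (hζ : ∀ᶠ r in atTop, HasDerivAt ζ (-h r * ζ r + g r) r) (hh : ∀ᶠ r in atTop, 0 ≤ h r)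
    (hg : g =O[atTop] (fun r => r ^ (e - 1))) : ζ =O[atTop] (fun r => r ^ e) := by
  obtain ⟨C, hC, hgC⟩ := isBigO_rpow_iff.1 hg
  obtain ⟨a, ha⟩ := eventually_atTop.1 (((hζ.and hh).and hgC).and (eventually_ge_atTop 1))
  have hζa := fun R (hR : a ≤ R) => abs_le_of_hasDerivAt_neg_mul_add
    (fun r hr => (ha r hr).1.1.1) (fun r hr => (ha r hr).1.1.2)
    (fun r hr => hasDerivAt_div_mul_rpow C he.ne' (by linarith [(ha r hr).2]))
    (fun r hr => (ha r hr).1.2) hR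
  refine isBigO_rpow_iff.2 ⟨|ζ a| + C / e, by positivity, ?_⟩
  filter_upwards [eventually_ge_atTop a] with R hR
  have h1 : 1 ≤ R ^ e := Real.one_le_rpow ((ha R hR).2) he.le
  have h2 : 0 ≤ C / e * a ^ e := by have := (ha a le_rfl).2; positivity
  nlinarith [hζa R hR, abs_nonneg (ζ a)]

theorem exists_tendsto_of_hasDerivAt_neg_mul_add {ζ h g : ℝ → ℝ} {m : ℝ} (hm : 0 < m)
    (hζ : ∀ᶠ r in atTop, HasDerivAt ζ (-h r * ζ r + g r) r) (hh : ∀ᶠ r in atTop, 0 ≤ h r)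
    (hh' : h =O[atTop] (fun r => r ^ (-m - 1))) (hg : g =O[atTop] (fun r => r ^ (-m - 1))) :
    ∃ L, Tendsto ζ atTop (𝓝 L) := by
  obtain ⟨C, hC, hghC⟩ := isBigO_rpow_iff.1 (hh'.norm_left.add hg.norm_left)
  obtain ⟨a, ha⟩ := eventually_atTop.1 (((hζ.and hh).and hghC).and (eventually_ge_atTop 1))
  have ha0 : 0 < a := by linarith [(ha a le_rfl).2]
  have hbound : ∀ r ∈ Ici a, |h r| + |g r| ≤ C * r ^ (-m - 1) := fun r hr => by
    simpa [abs_of_nonneg (add_nonneg (abs_nonneg (h r)) (abs_nonneg (g r)))] using (ha r hr).1.2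
  set M := |ζ a| + C / m * a ^ (-m)
  have hζM : ∀ R ∈ Ici a, |ζ R| ≤ M := fun R hR => by
    have hζR := abs_le_of_hasDerivAt_neg_mul_add (G := fun r => C / (-m) * r ^ (-m))
      (fun r hr => (ha r hr).1.1.1) (fun r hr => (ha r hr).1.1.2)
      (fun r hr => hasDerivAt_div_mul_rpow C (neg_ne_zero.2 hm.ne') (by linarith [hr.out]))
      (fun r hr => by linarith [hbound r hr, abs_nonneg (h r)]) hR
    have hGR : 0 ≤ C / m * R ^ (-m) :=
      mul_nonneg (div_nonneg hC hm.le) (Real.rpow_nonneg (by linarith [hR.out]) _)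
    simp only [div_neg, neg_mul] at hζR
    linarith
  have hint : IntegrableOn (deriv ζ) (Ioi a) := by
    refine ((integrableOn_Ioi_rpow_of_lt (by linarith : -m - 1 < -1) ha0).const_mul
      (C * (M + 1))).mono' (measurable_deriv ζ).aestronglyMeasurable
      ((ae_restrict_iff' measurableSet_Ioi).2 (ae_of_all _ fun r hr => ?_))
    have hr : r ∈ Ici a := Ioi_subset_Ici_self hr
    rw [((ha r hr).1.1.1).deriv, Real.norm_eq_abs]
    have htri : |-h r * ζ r + g r| ≤ |h r| * |ζ r| + |g r| := by
      simpa [abs_mul] using abs_add_le (-h r * ζ r) (g r)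
    nlinarith [hbound r hr, hζM r hr, abs_nonneg (h r), abs_nonneg (ζ r), abs_nonneg (g r)]
  exact ⟨_, tendsto_limUnder_of_hasDerivAt_of_integrableOn_Ioi
    (fun r hr => ((ha r (Ioi_subset_Ici_self hr)).1.1.1).differentiableAt.hasDerivAt) hint⟩

theorem eventually_le_rpow_of_hasDerivAt_le {v v' : ℝ → ℝ} {p γ B M : ℝ} (hp : 1 < p)
    (hγ : 0 ≤ γ) (hγp : γ * (2 - p) < p) (hB : 0 ≤ B)
    (hv : ∀ᶠ r in atTop, HasDerivAt v (v' r) r) (hM : ∀ᶠ r in atTop, v r ≤ M)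
    (hv' : ∀ᶠ r in atTop, 0 < v r → v' r ≤ -(r * phiP (p / (p - 1)) (v r)) + B * r ^ (-γ)) :
    ∃ K > 0, ∀ᶠ r in atTop, v r ≤ K * r ^ (-((γ + 1) * (p - 1))) := by
  have hp1 : 0 < p - 1 := by linarith
  set e := (γ + 1) * (p - 1) with he
  set s := 1 / (p - 1) with hs
  have hes : e * s = γ + 1 := by rw [he, hs]; field_simp
  obtain ⟨r₃, hr₃⟩ := eventually_atTop.1 (((hv.and hM).and hv').and (eventually_ge_atTop 1))
  set C := max M 0 + 1
  have hC : 0 < C := by positivity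
  have hMC : M < C := by linarith [le_max_left M 0]
  have hCs : 0 < C ^ s := Real.rpow_pos_of_pos hC s
  set r₄ := max r₃ ((B + e * C) / C ^ s + 1)
  have hr₄ : r₃ ≤ r₄ := le_max_left _ _
  have hr₄1 : 1 ≤ r₄ := (hr₃ r₃ le_rfl).2.trans hr₄
  have hr₄0 : 0 < r₄ := by linarith
  have hr₄C : B + e * C < C ^ s * r₄ := by
    have := le_max_right r₃ ((B + e * C) / C ^ s + 1)
    rw [← div_lt_iff₀' hCs]
    linarith
  set K := C * r₄ ^ e
  have hK : 0 < K := mul_pos hC (Real.rpow_pos_of_pos hr₄0 e)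
  have hKs : K ^ s = C ^ s * r₄ * r₄ ^ γ := by
    rw [Real.mul_rpow hC.le (Real.rpow_nonneg hr₄0.le e), ← Real.rpow_mul hr₄0.le, hes,
      Real.rpow_add_one hr₄0.ne']
    ring
  -- where `v` touches `K r ^ (-e)`, this gives `v' ≤ -(K ^ s - B) r ^ (-γ) < (K r ^ (-e))'`
  have hkey : ∀ r, r₄ ≤ r → e * K * r ^ (γ - e - 1) + B < K ^ s := fun r hr => by
    have h1 : r ^ (γ - e - 1) ≤ r₄ ^ (γ - e - 1) :=
      Real.rpow_le_rpow_of_nonpos hr₄0 hr (by nlinarith)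
    have h2 : K * r₄ ^ (γ - e - 1) = C * r₄ ^ (γ - 1) := by
      rw [mul_assoc, ← Real.rpow_add hr₄0]; ring_nf
    have h3 : r₄ ^ (γ - 1) ≤ r₄ ^ γ := Real.rpow_le_rpow_of_exponent_le hr₄1 (by linarith)
    have h4 : 1 ≤ r₄ ^ γ := Real.one_le_rpow hr₄1 hγ
    have he0 : 0 ≤ e := by positivity
    calc e * K * r ^ (γ - e - 1) + B ≤ e * (C * r₄ ^ (γ - 1)) + B := by
          rw [← h2, mul_assoc]; gcongr
      _ ≤ (B + e * C) * r₄ ^ γ := by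
          nlinarith [mul_le_mul_of_nonneg_left h3 (mul_nonneg he0 hC.le),
            mul_le_mul_of_nonneg_left h4 hB]
      _ < K ^ s := by rw [hKs]; gcongr
  refine ⟨K, hK, ?_⟩
  filter_upwards [eventually_ge_atTop r₄] with R hR
  have hr : ∀ r ∈ Icc r₄ R, 0 < r ∧ r₃ ≤ r := fun r hr => ⟨by linarith [hr.1], hr₄.trans hr.1⟩
  have hb : ∀ r ∈ Icc r₄ R, HasDerivAt (fun r => K * r ^ (-e)) (K * (-e * r ^ (-e - 1))) r :=
    fun r hr' => (Real.hasDerivAt_rpow_const (Or.inl (hr r hr').1.ne')).const_mul K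
  refine image_le_of_deriv_right_lt_deriv_boundary' (f' := v')
    (fun r hr' => ((hr₃ r (hr r hr').2).1.1.1).continuousAt.continuousWithinAt)
    (fun r hr' => ((hr₃ r (hr r (Ico_subset_Icc_self hr')).2).1.1.1).hasDerivWithinAt) ?_
    (fun r hr' => (hb r hr').continuousAt.continuousWithinAt)
    (fun r hr' => (hb r (Ico_subset_Icc_self hr')).hasDerivWithinAt) ?_ (right_mem_Icc.2 hR)
  · have : K * r₄ ^ (-e) = C := by
      rw [mul_assoc, ← Real.rpow_add hr₄0, add_neg_cancel, Real.rpow_zero, mul_one]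
    rw [this]
    exact ((hr₃ r₄ hr₄).1.1.2).trans hMC.le
  · intro r hr' hvr
    obtain ⟨hr0, hr3⟩ := hr r (Ico_subset_Icc_self hr')
    have hφ : r * phiP (p / (p - 1)) (v r) = K ^ s * r ^ (-γ) := by
      rw [hvr, phiP_of_nonneg (by rw [lt_div_iff₀ hp1]; linarith) (by positivity),
        show p / (p - 1) - 1 = s by rw [hs]; field_simp; ring, Real.mul_rpow hK.le (by positivity),
        ← Real.rpow_mul hr0.le, neg_mul, hes, show -γ = -(γ + 1) + 1 by ring,
        Real.rpow_add_one hr0.ne']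
      ring
    have hsplit : r ^ (-e - 1) = r ^ (γ - e - 1) * r ^ (-γ) := by
      rw [← Real.rpow_add hr0]; ring_nf
    have hv'r := (hr₃ r hr3).1.2 (by rw [hvr]; positivity)
    rw [hφ] at hv'r
    calc v' r ≤ -((K ^ s - B) * r ^ (-γ)) := by linarith
      _ < -(e * K * r ^ (γ - e - 1) * r ^ (-γ)) := neg_lt_neg <|
          mul_lt_mul_of_pos_right (by linarith [hkey r hr'.1]) (Real.rpow_pos_of_pos hr0 _)
      _ = K * (-e * r ^ (-e - 1)) := by rw [hsplit]; ring

theorem of_zero_of_step_min_add {P : ℝ → Prop} {c d : ℝ} (hc : 0 ≤ c) (hd : 0 < d) (h0 : P 0)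
    (hstep : ∀ γ ∈ Icc 0 c, P γ → P (min c (γ + d))) : P c := by
  have hn : ∀ n : ℕ, P (min c (n * d)) := by
    intro n
    induction n with
    | zero => simpa [min_eq_right hc] using h0
    | succ n ih =>
      have h := hstep _ ⟨le_min hc (by positivity), min_le_left _ _⟩ ih
      rwa [← min_add_add_right, ← min_assoc, min_eq_left (a := c) (by linarith), ← add_one_mul,
        ← Nat.cast_succ] at h
  obtain ⟨n, hn'⟩ := exists_nat_ge (c / d)
  simpa [min_eq_left ((div_le_iff₀ hd).1 hn')] using hn n

/-- Equation (E), for all large `r`, as a first-order system in `w` and `v = φ_p(w')`;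
then `w' = φ_{p/(p-1)}(v)`. -/
def IsSystemSolutionAtTop (N : ℕ) (p q α : ℝ) (w v : ℝ → ℝ) : Prop :=
  ∀ᶠ r in atTop, HasDerivAt w (phiP (p / (p - 1)) (v r)) r ∧
    HasDerivAt v (-((N - 1) / r * v r) - r * phiP (p / (p - 1)) (v r)
      - (α * w r + |w r| ^ (q - 1) * w r)) r

theorem IsSolutionOn.isSystemSolutionAtTop {N : ℕ} {p q α r₀ : ℝ} {w : ℝ → ℝ} (hp : 1 < p)
    (hw : IsSolutionOn N p q α w (Ici r₀)) :
    IsSystemSolutionAtTop N p q α w (fun r => phiP p (derivWithin w (Ici r₀) r)) := by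
  obtain ⟨hw₁, hv₁, hE⟩ := hw
  filter_upwards [eventually_gt_atTop r₀] with r hr
  have hnhds : Ici r₀ ∈ 𝓝 r := Ici_mem_nhds hr
  have hwd := ((hw₁.differentiableOn one_ne_zero) r hr.le).differentiableAt hnhds
  have hvd := ((hv₁.differentiableOn one_ne_zero) r hr.le).differentiableAt hnhds
  have hw' : HasDerivAt w (derivWithin w (Ici r₀) r) r := by
    rw [derivWithin_of_mem_nhds hnhds]; exact hwd.hasDerivAt
  have hv' : HasDerivAt (fun r => phiP p (derivWithin w (Ici r₀) r))
      (derivWithin (fun r => phiP p (derivWithin w (Ici r₀) r)) (Ici r₀) r) r := by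
    rw [derivWithin_of_mem_nhds hnhds]; exact hvd.hasDerivAt
  simp only [phiP_conjExponent_phiP hp]
  exact ⟨hw', hv'.congr_deriv (by linarith [hE r hr.le])⟩

noncomputable def energy (p q α w v : ℝ) : ℝ :=
  (p - 1) / p * |v| ^ (p / (p - 1)) + α / 2 * w ^ 2 + |w| ^ (q + 1) / (q + 1)

namespace IsSystemSolutionAtTop

variable {N : ℕ} {p q α : ℝ} {w v : ℝ → ℝ}

lemma eventually_hasDerivAt_energy (hs : IsSystemSolutionAtTop N p q α w v) (hp : 1 < p)
    (hq : 0 < q) :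
    ∀ᶠ r in atTop, HasDerivAt (fun r => energy p q α (w r) (v r))
      (-((N - 1) / r * (v r * phiP (p / (p - 1)) (v r))) - r * phiP (p / (p - 1)) (v r) ^ 2) r := by
  have hp' : 1 < p / (p - 1) := by rw [lt_div_iff₀ (by linarith)]; linarith
  filter_upwards [hs] with r ⟨hw, hv⟩
  have hv' := (hasDerivAt_abs_rpow (v r) hp').comp r hv
  have hw' := (hasDerivAt_abs_rpow (w r) (by linarith : 1 < q + 1)).comp r hw
  refine (((hv'.const_mul ((p - 1) / p)).add ((hw.pow 2).const_mul (α / 2))).add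
    (hw'.div_const (q + 1))).congr_deriv ?_
  have : p - 1 ≠ 0 := by linarith
  have : p ≠ 0 := by linarith
  simp only [phiP, show q + 1 - 2 = q - 1 by ring]
  field_simp
  ring

lemma exists_eventually_energy_le (hs : IsSystemSolutionAtTop N p q α w v) (hN : 1 ≤ N)
    (hp : 1 < p) (hq : 0 < q) : ∃ E, ∀ᶠ r in atTop, energy p q α (w r) (v r) ≤ E := by
  obtain ⟨a, ha⟩ := eventually_atTop.1
    ((hs.eventually_hasDerivAt_energy hp hq).and (eventually_gt_atTop 0))
  have hN' : (0 : ℝ) ≤ N - 1 := by simpa using (Nat.one_le_cast (α := ℝ)).2 hN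
  have hanti : AntitoneOn (fun r => energy p q α (w r) (v r)) (Ici a) :=
    antitoneOn_of_hasDerivWithinAt_nonpos (convex_Ici a)
      (fun r hr => (ha r hr).1.continuousAt.continuousWithinAt)
      (fun r hr => (ha r (interior_subset hr)).1.hasDerivWithinAt)
      (fun r hr => by
        have hr0 := (ha r (interior_subset hr)).2
        have := mul_phiP_self_nonneg (p / (p - 1)) (v r)
        have : 0 ≤ (N - 1) / r * (v r * phiP (p / (p - 1)) (v r)) := by positivity
        nlinarith [sq_nonneg (phiP (p / (p - 1)) (v r))])
  exact ⟨_, (eventually_ge_atTop a).mono fun r hr => hanti (mem_Ici.2 le_rfl) hr hr⟩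

theorem isBigO_one (hs : IsSystemSolutionAtTop N p q α w v) (hN : 1 ≤ N) (hp : 1 < p)
    (hq : 0 < q) (hα : 0 < α) :
    w =O[atTop] (fun _ => (1 : ℝ)) ∧ v =O[atTop] (fun _ => (1 : ℝ)) := by
  obtain ⟨E, hE⟩ := hs.exists_eventually_energy_le hN hp hq
  have hp' : 1 ≤ p / (p - 1) := by rw [le_div_iff₀ (by linarith)]; linarith
  have hterms : ∀ᶠ r in atTop, α / 2 * w r ^ 2 ≤ E ∧ (p - 1) / p * |v r| ^ (p / (p - 1)) ≤ E := by
    filter_upwards [hE] with r hr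
    have h1 : 0 ≤ (p - 1) / p * |v r| ^ (p / (p - 1)) :=
      mul_nonneg (div_nonneg (by linarith) (by linarith)) (by positivity)
    have h3 : 0 ≤ |w r| ^ (q + 1) / (q + 1) := by positivity
    unfold energy at hr
    constructor <;> nlinarith [sq_nonneg (w r)]
  constructor
  · refine IsBigO.of_bound (max 1 (2 * E / α)) ?_
    filter_upwards [hterms] with r hr
    replace hr := hr.1
    rw [norm_one, mul_one, Real.norm_eq_abs]
    rcases le_total |w r| 1 with h | h
    · exact h.trans (le_max_left _ _)
    · refine le_trans ?_ (le_max_right _ _)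
      have : |w r| ≤ w r ^ 2 := by nlinarith [sq_abs (w r)]
      rw [le_div_iff₀ hα]
      nlinarith
  · refine IsBigO.of_bound (max 1 (p / (p - 1) * E)) ?_
    filter_upwards [hterms] with r hr
    replace hr := hr.2
    rw [norm_one, mul_one, Real.norm_eq_abs]
    rcases le_total |v r| 1 with h | h
    · exact h.trans (le_max_left _ _)
    · refine le_trans ?_ (le_max_right _ _)
      calc |v r| = |v r| ^ (1 : ℝ) := (Real.rpow_one _).symm
        _ ≤ |v r| ^ (p / (p - 1)) := Real.rpow_le_rpow_of_exponent_le h hp'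
        _ = p / (p - 1) * ((p - 1) / p * |v r| ^ (p / (p - 1))) := by
          field_simp [show p - 1 ≠ 0 by linarith]
        _ ≤ p / (p - 1) * E := by gcongr

theorem isBigO_v (hs : IsSystemSolutionAtTop N p q α w v) (hN : 1 ≤ N) (hp : 1 < p)
    (hq : 1 ≤ q) {γ : ℝ} (hγ : 0 ≤ γ) (hγp : γ * (2 - p) < p)
    (hw : w =O[atTop] (fun r => r ^ (-γ))) (hv : v =O[atTop] (fun _ => (1 : ℝ))) :
    v =O[atTop] (fun r => r ^ (-((γ + 1) * (p - 1)))) := by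
  have hf : (fun r => α * w r + |w r| ^ (q - 1) * w r) =O[atTop] (fun r => r ^ (-γ)) :=
    (hw.const_mul_left α).add (by
      simpa using (isBigO_one_of_isBigO_rpow (by nlinarith) (hw.abs_rpow (by linarith))).mul hw)
  obtain ⟨B, hB, hfB⟩ := isBigO_rpow_iff.1 hf
  obtain ⟨M, hM⟩ := hv.bound
  have hvM : ∀ᶠ r in atTop, |v r| ≤ M := by simpa using hM
  have hN' : (0 : ℝ) ≤ N - 1 := by simpa using (Nat.one_le_cast (α := ℝ)).2 hN
  obtain ⟨K₁, hK₁, hup⟩ := eventually_le_rpow_of_hasDerivAt_le hp hγ hγp hB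
    (hs.mono fun r hr => hr.2) (hvM.mono fun r hr => (le_abs_self _).trans hr) (by
      filter_upwards [hfB, eventually_gt_atTop 0] with r hfr hr hvr
      have : 0 ≤ (N - 1) / r * v r := by positivity
      linarith [neg_le_abs (α * w r + |w r| ^ (q - 1) * w r)])
  obtain ⟨K₂, hK₂, hlow⟩ := eventually_le_rpow_of_hasDerivAt_le (v := fun r => -v r) hp hγ hγp hB
    (hs.mono fun r hr => hr.2.neg) (hvM.mono fun r hr => (neg_le_abs _).trans hr) (by
      filter_upwards [hfB, eventually_gt_atTop 0] with r hfr hr hvr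
      have : 0 ≤ (N - 1) / r * -v r := by positivity
      simp only [phiP_neg]
      linarith [le_abs_self (α * w r + |w r| ^ (q - 1) * w r)])
  refine isBigO_rpow_iff.2 ⟨K₁ + K₂, by positivity, ?_⟩
  filter_upwards [hup, hlow, eventually_gt_atTop 0] with r h₁ h₂ hr
  have := Real.rpow_pos_of_pos hr (-((γ + 1) * (p - 1)))
  rw [abs_le]
  constructor <;> nlinarith

/-- The term `r w'` of (E) cancels in `(r w + v)'`, which leaves a linear equation for
`ζ = r^(α-1) (r w + v)` with the nonnegative damping `|w|^(q-1) / r`. -/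
lemma eventually_hasDerivAt_zeta (hs : IsSystemSolutionAtTop N p q α w v) :
    ∀ᶠ r in atTop, HasDerivAt (fun r => r ^ (α - 1) * (r * w r + v r))
      (-(|w r| ^ (q - 1) / r) * (r ^ (α - 1) * (r * w r + v r))
        + (α - N + |w r| ^ (q - 1)) * (r ^ (α - 2) * v r)) r := by
  filter_upwards [hs, eventually_gt_atTop 0] with r hr hr0
  refine ((Real.hasDerivAt_rpow_const (Or.inl hr0.ne')).mul
    (((hasDerivAt_id r).mul hr.1).add hr.2)).congr_deriv ?_
  rw [show α - 1 - 1 = α - 2 by ring,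
    show r ^ (α - 1) = r ^ (α - 2) * r by rw [← Real.rpow_add_one hr0.ne']; ring_nf]
  simp only [Pi.add_apply, Pi.mul_apply, id]
  field_simp
  ring

lemma isBigO_zeta_forcing (hq : 1 ≤ q) {γ e : ℝ} (hγ : 0 ≤ γ)
    (hw : w =O[atTop] (fun r => r ^ (-γ))) (hv : v =O[atTop] (fun r => r ^ (-e))) :
    (fun r => (α - N + |w r| ^ (q - 1)) * (r ^ (α - 2) * v r))
      =O[atTop] (fun r => r ^ (α - 2 - e)) := by
  have hw' := isBigO_one_of_isBigO_rpow (by nlinarith) (hw.abs_rpow (by linarith : 0 ≤ q - 1))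
  simpa [sub_eq_add_neg] using ((isBigO_const_const (α - N) one_ne_zero atTop).add hw').mul
    ((isBigO_refl (fun r : ℝ => r ^ (α - 2)) atTop).mul_rpow hv)

theorem isBigO_w_of_isBigO_v (hs : IsSystemSolutionAtTop N p q α w v) (hq : 1 ≤ q)
    {γ e e' : ℝ} (hγ : 0 ≤ γ) (hw : w =O[atTop] (fun r => r ^ (-γ)))
    (hv : v =O[atTop] (fun r => r ^ (-e))) (he' : 0 < e') (hee' : α - 1 - e ≤ e') :
    w =O[atTop] (fun r => r ^ (e' - α)) := by
  have hζ := isBigO_rpow_of_hasDerivAt_neg_mul_add he' hs.eventually_hasDerivAt_zeta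
    ((eventually_gt_atTop 0).mono fun r hr => by positivity)
    ((isBigO_zeta_forcing hq hγ hw hv).trans (rpow_isBigO_rpow (by linarith)))
  have hrv : (fun r => r ^ (α - 1) * v r) =O[atTop] (fun r => r ^ e') :=
    ((isBigO_refl _ _).mul_rpow hv).trans (rpow_isBigO_rpow (by linarith))
  have hrw : (fun r => r ^ α * w r) =O[atTop] (fun r => r ^ e') := by
    refine (hζ.sub hrv).congr' ?_ EventuallyEq.rfl
    filter_upwards [eventually_gt_atTop 0] with r hr
    exact (rpow_mul_eq_sub hr _ _).symm
  refine (((isBigO_refl (fun r : ℝ => r ^ (-α)) atTop).mul_rpow hrw).congr' ?_ ?_)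
  · filter_upwards [eventually_gt_atTop 0] with r hr
    rw [← mul_assoc, ← Real.rpow_add hr, neg_add_cancel, Real.rpow_zero, one_mul]
  · exact .of_eq (funext fun r => by ring_nf)

theorem exists_tendsto (hs : IsSystemSolutionAtTop N p q α w v) (hq : 1 < q) {γ e : ℝ}
    (hγ : 0 < γ) (hw : w =O[atTop] (fun r => r ^ (-γ))) (hv : v =O[atTop] (fun r => r ^ (-e)))
    (he : α - 1 - e < 0) : ∃ L, Tendsto (fun r => r ^ α * w r) atTop (𝓝 L) := by
  set m := min (γ * (q - 1)) (e + 1 - α)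
  have hm : 0 < m := lt_min (mul_pos hγ (by linarith)) (by linarith)
  have hh : (fun r => |w r| ^ (q - 1) / r) =O[atTop] (fun r => r ^ (-m - 1)) := by
    refine (((hw.abs_rpow (c := q - 1) (by linarith)).mul_rpow
      (isBigO_refl (fun r : ℝ => r ^ (-1 : ℝ)) atTop)).congr_left fun r => ?_).trans
      (rpow_isBigO_rpow ?_)
    · rw [Real.rpow_neg_one, div_eq_mul_inv]
    · have : m ≤ γ * (q - 1) := min_le_left _ _
      linarith
  obtain ⟨L, hL⟩ := exists_tendsto_of_hasDerivAt_neg_mul_add hm hs.eventually_hasDerivAt_zeta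
    ((eventually_gt_atTop 0).mono fun r hr => by positivity) hh
    ((isBigO_zeta_forcing hq.le hγ.le hw hv).trans
      (rpow_isBigO_rpow (by linarith [min_le_right (γ * (q - 1)) (e + 1 - α)])))
  have hrv : Tendsto (fun r => r ^ (α - 1) * v r) atTop (𝓝 0) := by
    refine ((isBigO_refl _ _).mul_rpow hv).trans_tendsto ?_
    simpa [show α - 1 + -e = -(e + 1 - α) by ring] using
      tendsto_rpow_neg_atTop (by linarith : 0 < e + 1 - α)
  refine ⟨L - 0, (hL.sub hrv).congr' ?_⟩
  filter_upwards [eventually_gt_atTop 0] with r hr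
  exact (rpow_mul_eq_sub hr _ _).symm

theorem isBigO_w_improve (hs : IsSystemSolutionAtTop N p q α w v) (hN : 1 ≤ N) (hp : 1 < p)
    (hq : 1 ≤ q) (hv₁ : v =O[atTop] (fun _ => (1 : ℝ))) {γ ε : ℝ} (hγ : 0 ≤ γ)
    (hγp : γ * (2 - p) < p) (hε : 0 < ε) (hw : w =O[atTop] (fun r => r ^ (-γ))) :
    w =O[atTop] (fun r => r ^ (-min (α - ε) ((p - 1) * γ + p))) := by
  refine (hs.isBigO_w_of_isBigO_v hq hγ hw (hs.isBigO_v hN hp hq hγ hγp hw hv₁)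
    (lt_max_of_lt_right hε) (le_max_left _ _)).congr_right fun r => ?_
  congr 1
  rcases le_total (α - ε) ((p - 1) * γ + p) with h | h
  · rw [min_eq_left h, max_eq_right (by linarith)]; ring
  · rw [min_eq_right h, max_eq_left (by linarith)]; ring

end IsSystemSolutionAtTop

theorem stmt8_general (N : ℕ) (hN : 1 ≤ N) (p q α : ℝ) (hp : 1 < p) (hq : 1 < q) (hα : 0 < α)
    (hL : 2 < p ∨ (p < 2 ∧ α < p / (2 - p)))
    (r₀ : ℝ) (w : ℝ → ℝ) (hw : IsSolutionOn N p q α w (Ici r₀)) :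
    ∃ L : ℝ, Tendsto (fun r => r ^ α * w r) atTop (𝓝 L) := by
  have hs := hw.isSystemSolutionAtTop hp
  obtain ⟨hw₁, hv₁⟩ := hs.isBigO_one hN hp (by linarith) hα
  have hκ : 0 < α * (p - 2) + p := by
    rcases hL with h | ⟨h₁, h₂⟩
    · nlinarith
    · rw [lt_div_iff₀ (by linarith)] at h₂
      linarith
  set ε := min (α / 2) ((α * (p - 2) + p) / (2 * (p - 1)))
  have hε : 0 < ε := lt_min (by linarith) (div_pos hκ (by linarith))
  have hεα : ε ≤ α / 2 := min_le_left _ _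
  have hεκ : ε * (p - 1) ≤ (α * (p - 2) + p) / 2 := by
    have := min_le_right (α / 2) ((α * (p - 2) + p) / (2 * (p - 1)))
    rw [le_div_iff₀ (by linarith)] at this
    linarith
  set d := min p (p - (2 - p) * (α - ε))
  have hd : 0 < d := lt_min (by linarith) (by nlinarith)
  have hD : ∀ γ ∈ Icc 0 (α - ε), d ≤ p - (2 - p) * γ := fun γ hγ => by
    rcases le_total p 2 with h | h
    · exact (min_le_right _ _).trans (by nlinarith [hγ.2])
    · exact (min_le_left _ _).trans (by nlinarith [hγ.1])
  have hdecay : w =O[atTop] (fun r => r ^ (-(α - ε))) :=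
    of_zero_of_step_min_add (P := fun γ => w =O[atTop] fun r => r ^ (-γ)) (by linarith) hd
      (by simpa using hw₁) fun γ hγ hγw =>
      (hs.isBigO_w_improve hN hp hq.le hv₁ hγ.1 (by linarith [hD γ hγ]) hε hγw).trans
        (rpow_isBigO_rpow (neg_le_neg (min_le_min_left _ (by linarith [hD γ hγ]))))
  have hv := hs.isBigO_v hN hp hq.le (by linarith)
    (by linarith [hD (α - ε) ⟨by linarith, le_rfl⟩]) hdecay hv₁
  exact hs.exists_tendsto hq (by linarith) hdecay hv (by nlinarith)

/-- Assume (L): `p > 2`, or `p < 2` and `α < δ = p/(2-p)`. Then every solution of (E)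
on `[r₀,∞)` satisfies `lim_{r→∞} r^α w(r) = L` for some `L ∈ ℝ`. -/
theorem stmt8 (N : ℕ) (hN : 1 ≤ N) (p q α : ℝ) (hp : 1 < p) (hq : 1 < q) (hα : 0 < α)
    (hL : 2 < p ∨ (p < 2 ∧ α < p / (2 - p)))
    (r₀ : ℝ) (hr₀ : 0 < r₀) (w : ℝ → ℝ) (hw : IsSolutionOn N p q α w (Ici r₀)) :
    ∃ L : ℝ, Tendsto (fun r => r ^ α * w r) atTop (𝓝 L) :=
  stmt8_general N hN p q α hp hq hα hL r₀ w hw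
end
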